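/- arXiv:2206.00928 — 2 statements merged into one kernel-verified Lean document; each statement's English description precedes it below -/
import Mathlib

section
/- Let α ∈ {+,−}, G a bidirected graph, and H an induced subgraph of G that is an α-semiradial with root r ∈ V(H). Assume no vertex adjacent to V(G)∖V(H) has a (−α)-ditrail to r in G. Let G′ be obtained from G by adding edges between vertices of V(H) without a (−α)-ditrail to r and vertices of V(G)∖V(H), where the ends in V(H) carry sign α. Then for each β ∈ {+,−}, the set of vertices with a β-ditrail to r is the same in G′ as in G. -/
/-- A bidirected graph on vertex type `V`: each edge has two ends (`fst`, `snd`),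
each carrying a sign (`true` = `+`, `false` = `-`). Loops are edges with `fst = snd`. -/
structure BG (V : Type) where
  E : Type
  fst : E → V
  snd : E → V
  s1 : E → Bool
  s2 : E → Bool

namespace BG

variable {V : Type}

/-- A step is a traversal of an edge in one of the two directions. -/
abbrev Step (G : BG V) : Type := G.E × Bool

variable (G : BG V)

def src (st : G.Step) : V := if st.2 then G.fst st.1 else G.snd st.1
def tgt (st : G.Step) : V := if st.2 then G.snd st.1 else G.fst st.1
/-- sign of the edge at the source end of the step -/
def ssign (st : G.Step) : Bool := if st.2 then G.s1 st.1 else G.s2 st.1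
/-- sign of the edge at the target end of the step -/
def tsign (st : G.Step) : Bool := if st.2 then G.s2 st.1 else G.s1 st.1

/-- `p` is a ditrail from `x` to `y`: an edge-simple walk such that at each internal
vertex the sign of the entering edge-end and the sign of the leaving edge-end are opposite. -/
def IsDitrail (p : List G.Step) (x y : V) : Prop :=
  (p.map Prod.fst).Nodup ∧
  List.Chain' (fun a b => G.tgt a = G.src b ∧ G.tsign a = !G.ssign b) p ∧
  (∀ st, p.head? = some st → G.src st = x) ∧
  (∀ st, p.getLast? = some st → G.tgt st = y) ∧
  (p = [] → x = y)

/-- There is an `(α, β)`-ditrail from `x` to `y` using only edges from `Es` and avoiding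
the vertex set `A`.  The trivial (empty) ditrail from `x` to `x` counts as an
`(!β, β)`-ditrail for each `β`. -/
def ReachWA (Es : Set G.E) (A : Set V) (α β : Bool) (x y : V) : Prop :=
  ∃ p : List G.Step, G.IsDitrail p x y ∧ (∀ st ∈ p, st.1 ∈ Es) ∧
    x ∉ A ∧ (∀ st ∈ p, G.tgt st ∉ A) ∧
    (p.head?.map G.ssign).getD (!β) = α ∧ (p.getLast?.map G.tsign).getD β = β

/-- There is an `(α, β)`-ditrail from `x` to `y` using only edges from `Es`. -/
def ReachW (Es : Set G.E) (α β : Bool) (x y : V) : Prop := G.ReachWA Es ∅ α β x y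

/-- There is an `(α, β)`-ditrail from `x` to `y` in `G`. -/
def Reach (α β : Bool) (x y : V) : Prop := G.ReachW Set.univ α β x y

/-- There is an `α`-ditrail from `x` to `y` in `G` (only the starting sign is constrained). -/
def ReachS (α : Bool) (x y : V) : Prop := ∃ β, G.Reach α β x y

/-- There is an `α`-ditrail from `x` to `y` using only edges from `Es`. -/
def ReachWS (Es : Set G.E) (α : Bool) (x y : V) : Prop := ∃ β, G.ReachW Es α β x y

def Adj (u v : V) : Prop :=
  ∃ e : G.E, (G.fst e = u ∧ G.snd e = v) ∨ (G.fst e = v ∧ G.snd e = u)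

/-- `G` is an `α`-radial with root `r`. -/
def IsRadial (α : Bool) (r : V) : Prop := ∀ v, G.Reach α (!α) v r
/-- `G` is an `α`-semiradial with root `r`. -/
def IsSemiradial (α : Bool) (r : V) : Prop := ∀ v, G.ReachS α v r

/-- `x` is an (`α`-)strong vertex with respect to `r`. -/
def StrongVtx (α : Bool) (r x : V) : Prop :=
  G.Reach α (!α) x r ∧ G.Reach (!α) (!α) x r
/-- `x` is a sublinear vertex with respect to `r`. -/
def SublinearVtx (α : Bool) (r x : V) : Prop :=
  G.Reach α (!α) x r ∧ ¬ G.Reach (!α) (!α) x r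
/-- `x` is an absolute vertex with respect to `r`. -/
def AbsoluteVtx (r x : V) : Prop := ∀ α : Bool, G.ReachS α x r
/-- `x` is an `α`-linear vertex with respect to `r`. -/
def LinearVtx (α : Bool) (r x : V) : Prop := G.ReachS α x r ∧ ¬ G.ReachS (!α) x r

/-- sharpness at the root: every neighbor of `r` is linear. -/
def SharpAt (α : Bool) (r : V) : Prop := ∀ v, G.Adj v r → G.LinearVtx α r v

/-- `v` is joined to `r` by an edge whose end at `r` has sign `!α`. -/
def OppNbr (α : Bool) (r v : V) : Prop :=
  ∃ e : G.E, (G.fst e = r ∧ G.snd e = v ∧ G.s1 e = !α) ∨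
    (G.snd e = r ∧ G.fst e = v ∧ G.s2 e = !α)

/-- roundness: every vertex joined to `r` by an edge whose end at `r` has sign `!α` is strong. -/
def RoundAt (α : Bool) (r : V) : Prop := ∀ v, G.OppNbr α r v → G.StrongVtx α r v

/-- `e` is a cut edge of `S` whose end in `S` carries the sign `γ`. -/
def CutSign (S : Set V) (γ : Bool) (e : G.E) : Prop :=
  (G.fst e ∈ S ∧ G.snd e ∉ S ∧ G.s1 e = γ) ∨
  (G.snd e ∈ S ∧ G.fst e ∉ S ∧ G.s2 e = γ)

/-- edges of the subgraph of `G` induced by `S` -/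
def inducedEdges (S : Set V) : Set G.E := {e | G.fst e ∈ S ∧ G.snd e ∈ S}

/-- a simple diear relative to `S`: a nonempty ditrail whose first and last vertices
lie in `S` and whose internal vertices avoid `S`. -/
def IsSimpleDiear (S : Set V) (p : List G.Step) : Prop :=
  p ≠ [] ∧ ∃ u v, G.IsDitrail p u v ∧ u ∈ S ∧ v ∈ S ∧
    ∀ w ∈ p.dropLast.map G.tgt, w ∉ S

/-- a scoop diear relative to `S` with grip `e`: of the form `(y,e,x) + P` where `y ∈ S`,
`x ∉ S`, and `P` is a ditrail from `x` back to `y` ending with the reverse traversal of `e`,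
whose internal vertices avoid `S`. -/
def IsScoopDiear (S : Set V) (e : G.E) (p : List G.Step) : Prop :=
  ∃ d q, p = (e, d) :: q ∧ G.src (e, d) ∈ S ∧ G.tgt (e, d) ∉ S ∧
    G.IsDitrail q (G.tgt (e, d)) (G.src (e, d)) ∧
    q.getLast? = some (e, !d) ∧
    (∀ st, q.head? = some st → G.ssign st = !(G.tsign (e, d))) ∧
    ∀ w ∈ q.dropLast.map G.tgt, w ∉ S

/-- A subgraph of `G`. -/
structure Sub (G : BG V) where
  verts : Set V
  edges : Set G.E
  fst_mem : ∀ e ∈ edges, G.fst e ∈ verts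
  snd_mem : ∀ e ∈ edges, G.snd e ∈ verts

variable {G}

def Sub.le (K L : G.Sub) : Prop := K.verts ⊆ L.verts ∧ K.edges ⊆ L.edges

def Sub.union (K L : G.Sub) : G.Sub where
  verts := K.verts ∪ L.verts
  edges := K.edges ∪ L.edges
  fst_mem := fun e he => he.elim (fun h => Or.inl (K.fst_mem e h)) (fun h => Or.inr (L.fst_mem e h))
  snd_mem := fun e he => he.elim (fun h => Or.inl (K.snd_mem e h)) (fun h => Or.inr (L.snd_mem e h))

/-- the subgraph `K` is an `α`-semiradial with root `r`. -/
def Sub.IsSemiradial (K : G.Sub) (α : Bool) (r : V) : Prop :=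
  r ∈ K.verts ∧ ∀ v ∈ K.verts, G.ReachWS K.edges α v r

/-- the subgraph `K` is an absolute semiradial with root `r`. -/
def Sub.IsAbsolute (K : G.Sub) (r : V) : Prop := ∀ α : Bool, K.IsSemiradial α r

/-- the subgraph `K` is an `α`-radial with root `r`. -/
def Sub.IsRadial (K : G.Sub) (α : Bool) (r : V) : Prop :=
  r ∈ K.verts ∧ ∀ v ∈ K.verts, G.ReachW K.edges α (!α) v r

/-- the subgraph `K` is a strong `α`-radial with root `r`. -/
def Sub.IsStrong (K : G.Sub) (α : Bool) (r : V) : Prop :=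
  K.IsRadial α r ∧ ∀ v ∈ K.verts, G.ReachW K.edges (!α) (!α) v r

/-- the subgraph `K` is an almost strong `α`-radial with root `r`. -/
def Sub.IsAlmostStrong (K : G.Sub) (α : Bool) (r : V) : Prop :=
  K.IsRadial α r ∧ (∀ v ∈ K.verts, v ≠ r → G.ReachW K.edges (!α) (!α) v r) ∧
    ¬ G.ReachW K.edges (!α) (!α) r r

/-- the subgraph `K` is a linear `α`-semiradial with root `r`: no loop at `r`,
and no nontrivial `(!α)`-ditrail (within `K`) to `r`. -/
def Sub.IsLinearSR (K : G.Sub) (α : Bool) (r : V) : Prop :=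
  K.IsSemiradial α r ∧ (¬ ∃ e ∈ K.edges, G.fst e = r ∧ G.snd e = r) ∧
    ∀ x p st, G.IsDitrail p x r → (∀ st' ∈ p, st'.1 ∈ K.edges) →
      p.head? = some st → G.ssign st = α

/-- candidate for the linear ground: a linear `α`-semiradial with root `r`
all of whose non-root vertices are linear in `G`. -/
def Sub.IsLinearGroundCand (K : G.Sub) (α : Bool) (r : V) : Prop :=
  K.IsLinearSR α r ∧ ∀ v ∈ K.verts, v ≠ r → G.LinearVtx α r v

/-- candidate for the extended ground over the almost strong ground `H`. -/
def Sub.IsExtCand (H K : G.Sub) (α : Bool) (r : V) : Prop :=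
  H.le K ∧ K.IsRadial α r ∧ ∀ v ∈ K.verts, v ∉ H.verts → G.SublinearVtx α r v

/-- the first shell of the extended ground `I` over the almost strong ground `H`:
shell vertices having an `(α,!α)`-ditrail to `r` within `I` avoiding `V(H) \ {r}`. -/
def firstShell (H I : G.Sub) (α : Bool) (r : V) : Set V :=
  {x | x ∈ I.verts ∧ x ∉ H.verts ∧ G.ReachWA I.edges (H.verts \ {r}) α (!α) x r}

/-- adding new edges to `G`: each `f : F` becomes an edge between `a f` and `b f`
with signs `sa f` and `sb f` at these ends. -/
def addE (G : BG V) {F : Type} (a b : F → V) (sa sb : F → Bool) : BG V where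
  E := G.E ⊕ F
  fst := Sum.elim G.fst a
  snd := Sum.elim G.snd b
  s1 := Sum.elim G.s1 sa
  s2 := Sum.elim G.s2 sb

/-- deleting the edges in `D` from `G`. -/
def delE (G : BG V) (D : Set G.E) : BG V where
  E := {e : G.E // e ∉ D}
  fst e := G.fst e.1
  snd e := G.snd e.1
  s1 e := G.s1 e.1
  s2 e := G.s2 e.1

/-- contracting the vertex set `S` of `G` to the single vertex `r` (deleting the
edges lying within `S`, i.e. the arising loops). -/
noncomputable def contract (G : BG V) (S : Set V) (r : V) : BG V where
  E := {e : G.E // ¬(G.fst e ∈ S ∧ G.snd e ∈ S)}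
  fst e := @ite _ (G.fst e.1 ∈ S) (Classical.propDecidable _) r (G.fst e.1)
  snd e := @ite _ (G.snd e.1 ∈ S) (Classical.propDecidable _) r (G.snd e.1)
  s1 e := G.s1 e.1
  s2 e := G.s2 e.1

/-- a gluing sum `(G; s) ⊕ (H; T)`: every edge-end of `G` at `s` is redirected
to some vertex of `H` (given by `f1`, `f2`), keeping all signs. -/
noncomputable def glue {VG VH : Type} (G : BG VG) (H : BG VH) (s : VG)
    (f1 f2 : G.E → VH) : BG (VG ⊕ VH) where
  E := G.E ⊕ H.E
  fst := Sum.elim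
    (fun e => @ite _ (G.fst e = s) (Classical.propDecidable _)
      (Sum.inr (f1 e)) (Sum.inl (G.fst e)))
    (fun e => Sum.inr (H.fst e))
  snd := Sum.elim
    (fun e => @ite _ (G.snd e = s) (Classical.propDecidable _)
      (Sum.inr (f2 e)) (Sum.inl (G.snd e)))
    (fun e => Sum.inr (H.snd e))
  s1 := Sum.elim G.s1 H.s1
  s2 := Sum.elim G.s2 H.s2

/-- the copy of `H` inside a gluing sum, as a subgraph. -/
noncomputable def glueHcopy {VG VH : Type} (G : BG VG) (H : BG VH) (s : VG)
    (f1 f2 : G.E → VH) : (glue G H s f1 f2).Sub where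
  verts := Set.range Sum.inr
  edges := Set.range Sum.inr
  fst_mem := by rintro _ ⟨e, rfl⟩; exact ⟨H.fst e, rfl⟩
  snd_mem := by rintro _ ⟨e, rfl⟩; exact ⟨H.snd e, rfl⟩

end BG

section Stmt3Aux

namespace BG

variable {V : Type} {G : BG V}

lemma bflip : ∀ {s t : Bool}, t = !s → s = !t := by decide

lemma isDitrail_nil {x : V} : G.IsDitrail [] x x :=
  ⟨List.nodup_nil, List.isChain_nil, by simp, by simp, fun _ => rfl⟩

lemma reachS_nil (G : BG V) (β : Bool) (x : V) : G.ReachS β x x :=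
  ⟨!β, [], isDitrail_nil, by simp, by simp, by simp, by simp, by simp⟩

lemma reachS_of_trail {p : List G.Step} {x y : V} {st : G.Step} {β : Bool}
    (h : G.IsDitrail p x y) (hhd : p.head? = some st) (hss : G.ssign st = β) :
    G.ReachS β x y := by
  have hne : p ≠ [] := by rintro rfl; simp at hhd
  refine ⟨G.tsign (p.getLast hne), p, h, by simp, by simp, by simp, ?_, ?_⟩
  · rw [hhd]; simpa using hss
  · rw [List.getLast?_eq_getLast hne]; simp

lemma reachS_elim {β : Bool} {x y : V} (h : G.ReachS β x y) :
    ∃ p, G.IsDitrail p x y ∧ (p = [] → x = y) ∧ ∀ st, p.head? = some st → G.ssign st = β := by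
  obtain ⟨β₂, p, hd, -, -, -, h5, h6⟩ := h
  refine ⟨p, hd, hd.2.2.2.2, fun st hst => ?_⟩
  rw [hst] at h5; simpa using h5

lemma reachWS_elim {Es : Set G.E} {β : Bool} {x y : V} (h : G.ReachWS Es β x y) :
    ∃ p, G.IsDitrail p x y ∧ (p = [] → x = y) ∧ ∀ st, p.head? = some st → G.ssign st = β := by
  obtain ⟨β₂, p, hd, -, -, -, h5, h6⟩ := h
  refine ⟨p, hd, hd.2.2.2.2, fun st hst => ?_⟩
  rw [hst] at h5; simpa using h5



lemma bflip2 : ∀ {s t : Bool}, t = !s → s = !t := by decide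

/-- reversed step -/
def rstep (st : G.Step) : G.Step := (st.1, !st.2)

@[simp] lemma rstep_fst (st : G.Step) : (rstep (G := G) st).1 = st.1 := rfl

@[simp] lemma src_rstep (st : G.Step) : G.src (rstep st) = G.tgt st := by
  obtain ⟨e, d⟩ := st; cases d <;> simp [src, tgt, rstep]

@[simp] lemma tgt_rstep (st : G.Step) : G.tgt (rstep st) = G.src st := by
  obtain ⟨e, d⟩ := st; cases d <;> simp [src, tgt, rstep]

@[simp] lemma ssign_rstep (st : G.Step) : G.ssign (rstep st) = G.tsign st := by
  obtain ⟨e, d⟩ := st; cases d <;> simp [ssign, tsign, rstep]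

@[simp] lemma tsign_rstep (st : G.Step) : G.tsign (rstep st) = G.ssign st := by
  obtain ⟨e, d⟩ := st; cases d <;> simp [ssign, tsign, rstep]

/-- reversed ditrail -/
def drev (p : List G.Step) : List G.Step := (p.map rstep).reverse

lemma drev_map_fst (p : List G.Step) :
    (drev (G := G) p).map Prod.fst = (p.map Prod.fst).reverse := by
  simp [drev, List.map_reverse, List.map_map]

lemma drev_eq_nil_iff {p : List G.Step} : drev (G := G) p = [] ↔ p = [] := by
  simp [drev]

lemma drev_head? {p : List G.Step} :
    (drev (G := G) p).head? = p.getLast?.map rstep := by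
  simp [drev, List.head?_reverse, List.getLast?_map]

lemma drev_getLast? {p : List G.Step} :
    (drev (G := G) p).getLast? = p.head?.map rstep := by
  simp [drev, List.getLast?_reverse, List.head?_map]

lemma drev_isDitrail {p : List G.Step} {x y : V} (h : G.IsDitrail p x y) :
    G.IsDitrail (drev p) y x := by
  obtain ⟨hnd, hch, hhd, hlast, hemp⟩ := h
  refine ⟨?_, ?_, ?_, ?_, ?_⟩
  · rw [drev_map_fst, List.nodup_reverse]; exact hnd
  · unfold List.Chain' at hch ⊢
    rw [drev, List.isChain_reverse, List.isChain_map]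
    refine hch.imp ?_
    rintro a c ⟨h1, h2⟩
    exact ⟨by simp [h1], by simp [bflip2 h2]⟩
  · intro st hst
    rw [drev_head?] at hst
    obtain ⟨s, hs, rfl⟩ := Option.map_eq_some_iff.mp hst
    rw [src_rstep]; exact hlast s hs
  · intro st hst
    rw [drev_getLast?] at hst
    obtain ⟨s, hs, rfl⟩ := Option.map_eq_some_iff.mp hst
    rw [tgt_rstep]; exact hhd s hs
  · intro h0; exact (hemp (drev_eq_nil_iff.mp h0)).symm

lemma ditrail_cons {st : G.Step} {Q : List G.Step} {x y : V}
    (h : G.IsDitrail (st :: Q) x y) :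
    G.src st = x ∧ G.IsDitrail Q (G.tgt st) y ∧
      ∀ s, Q.head? = some s → G.ssign s = !G.tsign st := by
  obtain ⟨hnd, hch, hhd, hlast, -⟩ := h
  unfold List.Chain' at hch
  rw [List.isChain_cons] at hch
  refine ⟨hhd st rfl, ⟨?_, hch.2, ?_, ?_, ?_⟩, fun s hs => bflip2 (hch.1 s hs).2⟩
  · exact (List.nodup_cons.mp (by simpa using hnd)).2
  · exact fun s hs => ((hch.1 s hs).1).symm
  · intro s hs
    apply hlast
    rw [show st :: Q = [st] ++ Q from rfl, List.getLast?_append, hs]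
    rfl
  · rintro rfl
    exact hlast st rfl

lemma ditrail_split {P₁ : List G.Step} {st : G.Step} {Q : List G.Step} {x y : V}
    (h : G.IsDitrail (P₁ ++ st :: Q) x y) :
    G.IsDitrail P₁ x (G.src st) ∧ G.IsDitrail (st :: Q) (G.src st) y ∧
      (∀ s, P₁.getLast? = some s → G.tgt s = G.src st ∧ G.tsign s = !G.ssign st) ∧
      (P₁ = [] → x = G.src st) := by
  obtain ⟨hnd, hch, hhd, hlast, -⟩ := h
  rw [List.map_append, List.nodup_append] at hnd
  unfold List.Chain' at hch
  rw [List.isChain_append] at hch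
  have hjun : ∀ s, P₁.getLast? = some s → G.tgt s = G.src st ∧ G.tsign s = !G.ssign st :=
    fun s hs => hch.2.2 s hs st rfl
  have hemp : P₁ = [] → x = G.src st := by
    rintro rfl
    exact (hhd st rfl).symm
  refine ⟨⟨hnd.1, hch.1, ?_, fun s hs => (hjun s hs).1, hemp⟩, ⟨hnd.2.1, hch.2.1, ?_, ?_, by simp⟩, hjun, hemp⟩
  · intro s hs
    apply hhd
    rw [List.head?_append, hs]
    rfl
  · intro s hs
    simp only [List.head?_cons, Option.some_inj] at hs
    subst hs; rfl
  · intro s hs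
    apply hlast
    rw [List.getLast?_append, hs]
    rfl

lemma ditrail_append {p q : List G.Step} {x z y : V}
    (hp : G.IsDitrail p x z) (hq : G.IsDitrail q z y) (hpne : p ≠ []) (hqne : q ≠ [])
    (hdisj : ∀ s ∈ p, ∀ t ∈ q, s.1 ≠ t.1)
    (hlk : ∀ s t, p.getLast? = some s → q.head? = some t → G.tsign s = !G.ssign t) :
    G.IsDitrail (p ++ q) x y := by
  refine ⟨?_, ?_, ?_, ?_, fun h0 => absurd (List.append_eq_nil_iff.mp h0).1 hpne⟩
  · rw [List.map_append, List.nodup_append]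
    refine ⟨hp.1, hq.1, ?_⟩
    intro e he1 e' he2 hee
    obtain ⟨s, hs, rfl⟩ := List.mem_map.mp he1
    obtain ⟨t, ht, rfl⟩ := List.mem_map.mp he2
    exact hdisj s hs t ht hee
  · unfold List.Chain'
    rw [List.isChain_append]
    refine ⟨hp.2.1, hq.2.1, fun s hs t ht => ⟨?_, hlk s t hs ht⟩⟩
    rw [hp.2.2.2.1 s hs]
    exact (hq.2.2.1 t ht).symm
  · intro s hs
    apply hp.2.2.1
    rw [List.head?_append, List.head?_eq_head hpne, Option.some_or] at hs
    rw [List.head?_eq_head hpne]; exact hs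
  · intro s hs
    apply hq.2.2.2.1
    rw [List.getLast?_append, List.getLast?_eq_getLast hqne, Option.some_or] at hs
    rw [List.getLast?_eq_getLast hqne]; exact hs

lemma list_last_occ {X : Type} {P : X → Prop} :
    ∀ {l : List X}, (∃ a ∈ l, P a) → ∃ l₁ a l₂, l = l₁ ++ a :: l₂ ∧ P a ∧ ∀ b ∈ l₂, ¬ P b := by
  intro l
  induction l with
  | nil => rintro ⟨a, h, -⟩; simp at h
  | cons c t ih =>
    intro h
    by_cases ht : ∃ a ∈ t, P a
    · obtain ⟨l₁, a, l₂, he, hPa, hl₂⟩ := ih ht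
      exact ⟨c :: l₁, a, l₂, by rw [he]; rfl, hPa, hl₂⟩
    · obtain ⟨a, ha, hPa⟩ := h
      rcases List.mem_cons.mp ha with rfl | h'
      · exact ⟨[], a, t, rfl, hPa, fun b hb hPb => ht ⟨b, hb, hPb⟩⟩
      · exact absurd ⟨a, h', hPa⟩ ht

lemma list_first_occ {X : Type} {P : X → Prop} :
    ∀ {l : List X}, (∃ a ∈ l, P a) → ∃ l₁ a l₂, l = l₁ ++ a :: l₂ ∧ P a ∧ ∀ b ∈ l₁, ¬ P b := by
  intro l
  induction l with
  | nil => rintro ⟨a, h, -⟩; simp at h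
  | cons c t ih =>
    intro h
    by_cases hc : P c
    · exact ⟨[], c, t, rfl, hc, by simp⟩
    · have ht : ∃ a ∈ t, P a := by
        obtain ⟨a, ha, hPa⟩ := h
        rcases List.mem_cons.mp ha with rfl | h'
        · exact absurd hPa hc
        · exact ⟨a, h', hPa⟩
      obtain ⟨l₁, a, l₂, he, hPa, hl₁⟩ := ih ht
      refine ⟨c :: l₁, a, l₂, by rw [he]; rfl, hPa, ?_⟩
      rintro b hb
      rcases List.mem_cons.mp hb with rfl | h'
      · exact hc
      · exact hl₁ b h'



lemma rollback {p q : List G.Step} {x z y : V}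
    (hp : G.IsDitrail p x z) (hq : G.IsDitrail q z y)
    (hpne : p ≠ []) (hqne : q ≠ [])
    (hjun : ∀ s t, p.getLast? = some s → q.head? = some t → G.tsign s = !G.ssign t) :
    (∃ st, p.head? = some st ∧ G.ReachS (G.ssign st) x y) ∨
    (∃ s, p.getLast? = some s ∧ G.ReachS (G.tsign s) z y) := by
  by_cases hsh : ∃ st ∈ q, st.1 ∈ p.map Prod.fst
  case neg =>
    left
    refine ⟨p.head hpne, List.head?_eq_head hpne, ?_⟩
    have hdisj : ∀ s ∈ p, ∀ t ∈ q, s.1 ≠ t.1 := by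
      intro s hs t ht hst
      exact hsh ⟨t, ht, hst ▸ List.mem_map_of_mem (f := Prod.fst) hs⟩
    have happ := ditrail_append hp hq hpne hqne hdisj hjun
    exact reachS_of_trail happ
      (by rw [List.head?_append, List.head?_eq_head hpne, Option.some_or]) rfl
  case pos =>
    obtain ⟨q₁, ρ, q₂, rfl, hρ, hq₂⟩ := list_last_occ hsh
    obtain ⟨π, hπp, hπe⟩ := List.mem_map.mp hρ
    obtain ⟨p₁, p₂, rfl⟩ := List.append_of_mem hπp
    obtain ⟨hp1, hpcons, hplink, hpemp⟩ := ditrail_split hp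
    obtain ⟨-, hpc2, hpcsign⟩ := ditrail_cons hpcons
    obtain ⟨hq1, hqcons, hqlink, hqemp⟩ := ditrail_split hq
    obtain ⟨-, hqc2, hqcsign⟩ := ditrail_cons hqcons
    have hnd := hp.1
    rw [List.map_append, List.nodup_append, List.map_cons, List.nodup_cons] at hnd
    have hπ1 : π.1 ∉ p₁.map Prod.fst := fun h => hnd.2.2 _ h _ List.mem_cons_self rfl
    have hπ2 : π.1 ∉ p₂.map Prod.fst := hnd.2.1.1
    by_cases hd : π.2 = ρ.2
    · -- same direction: π = ρ
      have hπρ : π = ρ := Prod.ext hπe hd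
      subst hπρ
      left
      by_cases hp1e : p₁ = []
      · subst hp1e
        have hx : x = G.src π := hpemp rfl
        exact ⟨π, rfl, reachS_of_trail (p := π :: q₂) (st := π) (hx ▸ hqcons) rfl rfl⟩
      · have hdisj : ∀ s ∈ p₁, ∀ t ∈ π :: q₂, s.1 ≠ t.1 := by
          intro s hs t ht hst
          rcases List.mem_cons.mp ht with rfl | ht'
          · exact hπ1 (hst ▸ List.mem_map_of_mem (f := Prod.fst) hs)
          · exact hq₂ t ht' (hst ▸ List.mem_map_of_mem (f := Prod.fst)
              (List.mem_append_left _ hs))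
        have hlk : ∀ s t, p₁.getLast? = some s → (π :: q₂).head? = some t →
            G.tsign s = !G.ssign t := by
          intro s t hs ht
          simp only [List.head?_cons, Option.some_inj] at ht
          subst ht
          exact (hplink s hs).2
        have happ := ditrail_append hp1 hqcons hp1e (by simp) hdisj hlk
        have hh2 : (p₁ ++ π :: q₂).head? = some (p₁.head hp1e) := by
          rw [List.head?_append, List.head?_eq_head hp1e, Option.some_or]
        refine ⟨p₁.head hp1e, ?_, reachS_of_trail happ hh2 rfl⟩
        rw [List.head?_append, List.head?_eq_head hp1e, Option.some_or]
    · -- opposite direction: ρ = rstep π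
      have hρ2 : ρ = rstep π := by
        refine Prod.ext hπe.symm ?_
        show ρ.2 = !π.2
        revert hd; cases π.2 <;> cases ρ.2 <;> decide
      subst hρ2
      right
      rw [src_rstep] at hqcons
      by_cases hp2e : p₂ = []
      · subst hp2e
        have htgt : G.tgt π = z := hpc2.2.2.2.2 rfl
        have hlast? : (p₁ ++ [π]).getLast? = some π := by
          rw [List.getLast?_append]; rfl
        exact ⟨π, hlast?, reachS_of_trail (p := rstep π :: q₂) (st := rstep π) (htgt ▸ hqcons) rfl (ssign_rstep π)⟩
      · have hdrev : G.IsDitrail (drev p₂) z (G.tgt π) := drev_isDitrail hpc2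
        have hdrevne : drev (G := G) p₂ ≠ [] := fun h => hp2e (drev_eq_nil_iff.mp h)
        have hdisj : ∀ s ∈ drev (G := G) p₂, ∀ t ∈ rstep π :: q₂, s.1 ≠ t.1 := by
          intro s hs t ht hst
          obtain ⟨u, hu, rfl⟩ : ∃ u ∈ p₂, rstep (G := G) u = s := by
            rw [drev, List.mem_reverse] at hs
            exact List.mem_map.mp hs
          rcases List.mem_cons.mp ht with rfl | ht'
          · exact hπ2 (by rw [← show u.1 = π.1 from hst]; exact List.mem_map_of_mem hu)
          · refine hq₂ t ht' ?_
            have hmm : u.1 ∈ (p₁ ++ π :: p₂).map Prod.fst :=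
              List.mem_map_of_mem (f := Prod.fst)
                (List.mem_append_right _ (List.mem_cons_of_mem _ hu))
            rwa [show u.1 = t.1 from hst] at hmm
        have hlk : ∀ s t, (drev (G := G) p₂).getLast? = some s →
            (rstep π :: q₂).head? = some t → G.tsign s = !G.ssign t := by
          intro s t hs ht
          simp only [List.head?_cons, Option.some_inj] at ht
          subst ht
          rw [drev_getLast?, List.head?_eq_head hp2e] at hs
          simp only [Option.map_some, Option.some_inj] at hs
          subst hs
          rw [tsign_rstep, ssign_rstep]
          exact hpcsign _ (List.head?_eq_head hp2e)
        have happ := ditrail_append hdrev hqcons hdrevne (by simp) hdisj hlk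
        have hlastp2 : p₂.getLast? = some (p₂.getLast hp2e) := List.getLast?_eq_getLast hp2e
        have hlast? : (p₁ ++ π :: p₂).getLast? = some (p₂.getLast hp2e) := by
          rw [List.getLast?_append, show (π :: p₂) = [π] ++ p₂ from rfl,
            List.getLast?_append, hlastp2, Option.some_or, Option.some_or]
        have hheadT : (drev (G := G) p₂ ++ rstep π :: q₂).head? =
            some (rstep (p₂.getLast hp2e)) := by
          rw [List.head?_append, drev_head?, hlastp2, Option.map_some, Option.some_or]
        exact ⟨p₂.getLast hp2e, hlast?, reachS_of_trail happ hheadT (ssign_rstep _)⟩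



section addE

variable {F : Type} (a : F → V) (b : F → V) (sa sb : F → Bool)

def upStep (G : BG V) (a : F → V) (b : F → V) (sa sb : F → Bool) (st : G.Step) :
    (G.addE a b sa sb).Step := (Sum.inl st.1, st.2)



lemma up_isDitrail {p : List G.Step} {x y : V} (h : G.IsDitrail p x y) :
    (G.addE a b sa sb).IsDitrail (p.map (upStep G a b sa sb)) x y := by
  obtain ⟨hnd, hch, hhd, hlast, hemp⟩ := h
  refine ⟨?_, ?_, ?_, ?_, by simpa using hemp⟩
  · rw [List.map_map]
    have := hnd.map (Sum.inl_injective (α := G.E) (β := F)); rw [List.map_map] at this; exact this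
  · unfold List.Chain' at hch ⊢
    rw [List.isChain_map]
    exact hch
  · intro st hst
    rw [List.head?_map] at hst
    obtain ⟨s, hs, rfl⟩ := Option.map_eq_some_iff.mp hst
    exact hhd s hs
  · intro st hst
    rw [List.getLast?_map] at hst
    obtain ⟨s, hs, rfl⟩ := Option.map_eq_some_iff.mp hst
    exact hlast s hs

lemma down_isDitrail {p : List G.Step} {x y : V}
    (h : (G.addE a b sa sb).IsDitrail (p.map (upStep G a b sa sb)) x y) :
    G.IsDitrail p x y := by
  obtain ⟨hnd, hch, hhd, hlast, hemp⟩ := h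
  refine ⟨?_, ?_, ?_, ?_, by simpa using hemp⟩
  · rw [List.map_map] at hnd
    exact (List.nodup_map_iff (f := (Sum.inl : G.E → G.E ⊕ F)) Sum.inl_injective).mp
      (by rw [List.map_map]; exact hnd)
  · unfold List.Chain' at hch ⊢
    rw [List.isChain_map] at hch
    exact hch
  · intro s hs
    exact hhd (upStep G a b sa sb s) (by rw [List.head?_map, hs]; rfl)
  · intro s hs
    exact hlast (upStep G a b sa sb s) (by rw [List.getLast?_map, hs]; rfl)

lemma down_exists : ∀ {P : List (G.addE a b sa sb).Step},
    (∀ st ∈ P, ∀ f : F, st.1 ≠ Sum.inr f) →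
    ∃ p : List G.Step, P = p.map (upStep G a b sa sb) := by
  intro P
  induction P with
  | nil => exact fun _ => ⟨[], rfl⟩
  | cons st Q ih =>
    intro h
    obtain ⟨p, rfl⟩ := ih (fun s hs => h s (List.mem_cons_of_mem _ hs))
    obtain ⟨e | f, d⟩ := st
    · exact ⟨(e, d) :: p, rfl⟩
    · exact absurd rfl (h (Sum.inr f, d) List.mem_cons_self f)

end addE

end BG

end Stmt3Aux


open BG in
theorem stmt3_key {V : Type} (G : BG V) (α : Bool) (S : Set V) (r : V) (hr : r ∈ S)
    (hsemiradial : ∀ v ∈ S, G.ReachWS (G.inducedEdges S) α v r)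
    {F : Type} (a : F → V) (b : F → V) (sa sb : F → Bool)
    (hends : ∀ f : F, a f ∈ S ∧ ¬ G.ReachS (!α) (a f) r ∧ b f ∉ S ∧ sa f = α) :
    ∀ (n : ℕ) (P : List (G.addE a b sa sb).Step) (x : V), P.length ≤ n →
      (G.addE a b sa sb).IsDitrail P x r →
      ∀ st, P.head? = some st → G.ReachS ((G.addE a b sa sb).ssign st) x r := by
  intro n
  induction n with
  | zero =>
    intro P x hlen hP st hst
    have hPe : P = [] := List.length_eq_zero_iff.mp (Nat.le_zero.mp hlen)
    subst hPe
    simp at hst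
  | succ n ih =>
    intro P x hlen hP st hst
    by_cases hnew : ∃ st' ∈ P, ∃ f : F, st'.1 = Sum.inr f
    · obtain ⟨P₁, st', Q, rfl, ⟨f, hf⟩, hP₁⟩ := list_first_occ hnew
      obtain ⟨se, d⟩ := st'
      simp only at hf
      subst hf
      obtain ⟨hP1, hPcons, hPlink, hPemp⟩ := ditrail_split hP
      obtain ⟨-, hQ, hQsign⟩ := ditrail_cons hPcons
      obtain ⟨haS, haR, hbS, hsa⟩ := hends f
      have hlenQ : Q.length ≤ n := by
        simp only [List.length_append, List.length_cons] at hlen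
        omega
      cases d with
      | false =>
        -- the new edge is traversed from b f to a f : contradiction with hends
        exfalso
        apply haR
        by_cases hQe : Q = []
        · subst hQe
          have hafr : (G.addE a b sa sb).tgt (Sum.inr f, false) = r := hQ.2.2.2.2 rfl
          have : a f = r := hafr
          rw [this]
          exact reachS_nil G (!α) r
        · have hQhd := List.head?_eq_head hQe
          have hres := ih Q ((G.addE a b sa sb).tgt (Sum.inr f, false)) hlenQ hQ (Q.head hQe) hQhd
          have hsgn : (G.addE a b sa sb).ssign (Q.head hQe) = !α := by
            rw [hQsign _ hQhd, show (G.addE a b sa sb).tsign (Sum.inr f, false) = sa f from rfl, hsa]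
          rw [hsgn] at hres
          exact hres
      | true =>
        -- the new edge is traversed from a f to b f
        obtain ⟨R, hRdi, hRemp, hRsign⟩ := reachWS_elim (hsemiradial (a f) haS)
        have hRne : R ≠ [] := by
          intro h0
          apply haR
          rw [hRemp h0]
          exact reachS_nil G (!α) r
        obtain ⟨p, rfl⟩ := down_exists a b sa sb (fun s hs f' hf' => hP₁ s hs ⟨f', hf'⟩)
        have hp : G.IsDitrail p x (a f) := down_isDitrail a b sa sb hP1
        by_cases hpe : p = []
        · subst hpe
          have hx : x = a f := hPemp rfl
          have hstst : st = ((Sum.inr f, true) : (G.addE a b sa sb).Step) := (Option.some_inj.mp hst).symm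
          rw [hstst, show (G.addE a b sa sb).ssign ((Sum.inr f, true) : (G.addE a b sa sb).Step) = sa f from rfl, hsa, hx]
          exact reachS_of_trail hRdi (List.head?_eq_head hRne)
            (hRsign _ (List.head?_eq_head hRne))
        · have hlastup : ∀ s : G.Step, p.getLast? = some s →
              G.tsign s = !α := by
            intro s hs
            have hls : (p.map (upStep G a b sa sb)).getLast? = some (upStep G a b sa sb s) := by
              rw [List.getLast?_map, hs]; rfl
            have h2 := (hPlink _ hls).2
            rw [show (G.addE a b sa sb).tsign (upStep G a b sa sb s) = G.tsign s from rfl,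
              show (G.addE a b sa sb).ssign (Sum.inr f, true) = sa f from rfl, hsa] at h2
            exact h2
          have hjun : ∀ s t, p.getLast? = some s → R.head? = some t →
              G.tsign s = !G.ssign t := by
            intro s t hs ht
            rw [hRsign t ht, hlastup s hs]
          rcases rollback hp hRdi hpe hRne hjun with ⟨s0, hs0, hre⟩ | ⟨s0, hs0, hre⟩
          · have hh1 : (p.map (upStep G a b sa sb)).head? = some (upStep G a b sa sb s0) := by
              rw [List.head?_map, hs0]; rfl
            have hstP : st = upStep G a b sa sb s0 := by
              rw [List.head?_append, hh1, Option.some_or] at hst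
              exact (Option.some_inj.mp hst).symm
            rw [hstP, show (G.addE a b sa sb).ssign (upStep G a b sa sb s0) = G.ssign s0 from rfl]
            exact hre
          · exfalso
            apply haR
            rwa [hlastup s0 hs0] at hre
    · obtain ⟨p, rfl⟩ := down_exists a b sa sb
        (fun s hs f' hf' => hnew ⟨s, hs, f', hf'⟩)
      have hp := down_isDitrail a b sa sb hP
      rw [List.head?_map] at hst
      obtain ⟨s, hs, rfl⟩ := Option.map_eq_some_iff.mp hst
      rw [show (G.addE a b sa sb).ssign (upStep G a b sa sb s) = G.ssign s from rfl]
      exact reachS_of_trail hp hs rfl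

theorem stmt3 {V : Type} (G : BG V) (α : Bool) (S : Set V) (r : V) (hr : r ∈ S)
    (hsemiradial : ∀ v ∈ S, G.ReachWS (G.inducedEdges S) α v r)
    (hnbr : ∀ u ∈ S, (∃ v, v ∉ S ∧ G.Adj u v) → ¬ G.ReachS (!α) u r)
    {F : Type} (a b : F → V) (sa sb : F → Bool)
    (hends : ∀ f : F, a f ∈ S ∧ ¬ G.ReachS (!α) (a f) r ∧ b f ∉ S ∧ sa f = α) :
    ∀ (β : Bool) (x : V),
      (G.addE a b sa sb).ReachS β x r ↔ G.ReachS β x r := by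
  intro β x
  constructor
  · intro h
    obtain ⟨P, hP, hPemp, hPsign⟩ := BG.reachS_elim h
    by_cases hPe : P = []
    · rw [hPemp hPe]
      exact BG.reachS_nil G β r
    · have hhd := List.head?_eq_head hPe
      have hres := stmt3_key G α S r hr hsemiradial a b sa sb hends P.length P x le_rfl hP _ hhd
      rwa [hPsign _ hhd] at hres
  · intro h
    obtain ⟨p, hp, hpemp, hpsign⟩ := BG.reachS_elim h
    by_cases hpe : p = []
    · rw [hpemp hpe]
      exact BG.reachS_nil _ β r
    · have h' := BG.up_isDitrail a b sa sb hp
      have hhd : (p.map (BG.upStep G a b sa sb)).head? =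
          some (BG.upStep G a b sa sb (p.head hpe)) := by
        rw [List.head?_map, List.head?_eq_head hpe]; rfl
      refine BG.reachS_of_trail h' hhd ?_
      rw [show (G.addE a b sa sb).ssign (BG.upStep G a b sa sb (p.head hpe)) =
        G.ssign (p.head hpe) from rfl]
      exact hpsign _ (List.head?_eq_head hpe)
end

section
/- Let α ∈ {+,−}, G a bidirected graph, and H an induced subgraph of G that is an α-radial with root r, such that no vertex adjacent to V(G)∖V(H) has a (−α,−α)-ditrail to r in G. Let F be any set of edges of the cut between V(H) and V(G)∖V(H) whose ends in V(H) have sign α. Then for each β ∈ {+,−}, the set of vertices with a (β,−α)-ditrail to r in G − F equals that in G. -/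
namespace BG

variable {V : Type} {G : BG V}

section Aux

/-- reverse traversal of a step -/
def stepRev (G : BG V) (st : G.Step) : G.Step := (st.1, !st.2)

@[simp] lemma stepRev_fst (st : G.Step) : (G.stepRev st).1 = st.1 := rfl

@[simp] lemma src_stepRev (st : G.Step) : G.src (G.stepRev st) = G.tgt st := by
  obtain ⟨e, c⟩ := st; cases c <;> rfl

@[simp] lemma tgt_stepRev (st : G.Step) : G.tgt (G.stepRev st) = G.src st := by
  obtain ⟨e, c⟩ := st; cases c <;> rfl

@[simp] lemma ssign_stepRev (st : G.Step) : G.ssign (G.stepRev st) = G.tsign st := by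
  obtain ⟨e, c⟩ := st; cases c <;> rfl

@[simp] lemma tsign_stepRev (st : G.Step) : G.tsign (G.stepRev st) = G.ssign st := by
  obtain ⟨e, c⟩ := st; cases c <;> rfl

lemma exists_first_split {A : Type*} {P : A → Prop} :
    ∀ {l : List A}, (∃ a ∈ l, P a) →
      ∃ l₁ a l₂, l = l₁ ++ a :: l₂ ∧ P a ∧ ∀ b ∈ l₁, ¬ P b := by
  intro l
  induction l with
  | nil => rintro ⟨a, h, -⟩; cases h
  | cons hd tl ih =>
    intro h
    by_cases hP : P hd
    · exact ⟨[], hd, tl, rfl, hP, by simp⟩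
    · obtain ⟨a, ha, hPa⟩ := h
      rcases List.mem_cons.1 ha with rfl | ha'
      · exact absurd hPa hP
      · obtain ⟨l₁, a, l₂, rfl, h1, h2⟩ := ih ⟨a, ha', hPa⟩
        refine ⟨hd :: l₁, a, l₂, rfl, h1, ?_⟩
        rintro b hb
        rcases List.mem_cons.1 hb with rfl | hb
        exacts [hP, h2 b hb]

lemma exists_last_split {A : Type*} {P : A → Prop} {l : List A} (h : ∃ a ∈ l, P a) :
    ∃ l₁ a l₂, l = l₁ ++ a :: l₂ ∧ P a ∧ ∀ b ∈ l₂, ¬ P b := by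
  obtain ⟨l₁, a, l₂, hl, h1, h2⟩ :=
    exists_first_split (l := l.reverse) (by obtain ⟨a, ha, hp⟩ := h; exact ⟨a, by simpa using ha, hp⟩)
  refine ⟨l₂.reverse, a, l₁.reverse, ?_, h1, fun b hb => h2 b (by simpa using hb)⟩
  have := congrArg List.reverse hl
  simpa using this


lemma isDitrail_split {p q : List G.Step} {x y : V} (h : G.IsDitrail (p ++ q) x y) :
    ∃ z, G.IsDitrail p x z ∧ G.IsDitrail q z y := by
  obtain ⟨hnd, hch, hhd, hlast, hemp⟩ := h
  rw [List.map_append, List.nodup_append] at hnd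
  unfold List.Chain' at hch
  rw [List.isChain_append] at hch
  refine ⟨(q.head?.map G.src).getD y, ⟨hnd.1, hch.1, ?_, ?_, ?_⟩, ⟨hnd.2.1, hch.2.1, ?_, ?_, ?_⟩⟩
  · intro st hst
    apply hhd
    rw [List.head?_append_of_ne_nil p (by rintro rfl; cases hst)]
    exact hst
  · intro st hst
    rcases hq : q with - | ⟨b, q'⟩
    · have h2 : (p ++ q).getLast? = some st := by rw [hq, List.append_nil]; exact hst
      simp only [hq, List.head?_nil, Option.map_none, Option.getD_none]
      exact hlast st h2
    · have h2 := (hch.2.2 st hst b (by rw [hq]; rfl)).1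
      simpa using h2
  · intro hp
    subst hp
    rcases hq : q with - | ⟨b, q'⟩
    · have := hemp (by rw [hq]; rfl)
      simp [hq, this]
    · have := hhd b (by rw [hq]; rfl)
      simp [← this]
  · intro st hst; simp [hst]
  · intro st hst
    apply hlast
    rw [List.getLast?_append_of_ne_nil p (by rintro rfl; cases hst)]
    exact hst
  · intro hq
    subst hq
    simp
lemma bool_flip {a b : Bool} (h : a = !b) : b = !a := by cases b <;> simp_all

lemma isDitrail_append {p q : List G.Step} {x y z : V}
    (hp : G.IsDitrail p x y) (hq : G.IsDitrail q y z)
    (hdisj : (p.map Prod.fst).Disjoint (q.map Prod.fst))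
    (hsgn : ∀ a, p.getLast? = some a → ∀ b, q.head? = some b → G.tsign a = !G.ssign b) :
    G.IsDitrail (p ++ q) x z := by
  obtain ⟨hnd1, hch1, hhd1, hlast1, hemp1⟩ := hp
  obtain ⟨hnd2, hch2, hhd2, hlast2, hemp2⟩ := hq
  refine ⟨?_, ?_, ?_, ?_, ?_⟩
  · rw [List.map_append, List.nodup_append']; exact ⟨hnd1, hnd2, hdisj⟩
  · unfold List.Chain'
    rw [List.isChain_append]
    refine ⟨hch1, hch2, ?_⟩
    intro a ha b hb
    exact ⟨(hlast1 a ha).trans (hhd2 b hb).symm, hsgn a ha b hb⟩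
  · intro st hst
    rcases hp' : p with - | ⟨c, p'⟩
    · rw [hp', List.nil_append] at hst
      rw [hemp1 hp']
      exact hhd2 st hst
    · apply hhd1
      rw [hp'] at hst ⊢
      rw [List.head?_append_of_ne_nil _ (by simp)] at hst
      exact hst
  · intro st hst
    rcases hq' : q with - | ⟨c, q'⟩
    · rw [hq', List.append_nil] at hst
      rw [← hemp2 hq']
      exact hlast1 st hst
    · apply hlast2
      rw [hq'] at hst ⊢
      rw [List.getLast?_append_of_ne_nil _ (by simp)] at hst
      exact hst
  · intro h
    rw [List.append_eq_nil_iff] at h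
    exact (hemp1 h.1).trans (hemp2 h.2)

/-- the reverse of a ditrail -/
def prev (G : BG V) (p : List G.Step) : List G.Step := (p.map G.stepRev).reverse

@[simp] lemma prev_head? (p : List G.Step) : (G.prev p).head? = p.getLast?.map G.stepRev := by
  rw [prev, List.head?_reverse, List.getLast?_map]

@[simp] lemma prev_getLast? (p : List G.Step) : (G.prev p).getLast? = p.head?.map G.stepRev := by
  rw [prev, List.getLast?_reverse, List.head?_map]

@[simp] lemma prev_map_fst (p : List G.Step) :
    (G.prev p).map Prod.fst = (p.map Prod.fst).reverse := by
  rw [prev, List.map_reverse, List.map_map]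
  rfl

lemma isDitrail_prev {p : List G.Step} {x y : V} (h : G.IsDitrail p x y) :
    G.IsDitrail (G.prev p) y x := by
  obtain ⟨hnd, hch, hhd, hlast, hemp⟩ := h
  refine ⟨?_, ?_, ?_, ?_, ?_⟩
  · rw [prev_map_fst]
    exact List.nodup_reverse.2 hnd
  · rw [prev]
    unfold List.Chain'
    rw [List.isChain_reverse, List.isChain_map]
    refine hch.imp ?_
    rintro a b ⟨h1, h2⟩
    exact ⟨by simp [h1], by simp [bool_flip h2]⟩
  · intro st hst
    rw [prev_head?] at hst
    obtain ⟨a, ha, rfl⟩ := Option.map_eq_some_iff.1 hst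
    simp [hlast a ha]
  · intro st hst
    rw [prev_getLast?] at hst
    obtain ⟨a, ha, rfl⟩ := Option.map_eq_some_iff.1 hst
    simp [hhd a ha]
  · intro h
    rw [prev] at h
    simp only [List.reverse_eq_nil_iff, List.map_eq_nil_iff] at h
    exact (hemp h).symm

lemma adj_step (st : G.Step) : G.Adj (G.src st) (G.tgt st) := by
  refine ⟨st.1, ?_⟩
  obtain ⟨e, c⟩ := st
  cases c <;> simp [src, tgt]

lemma adj_symm {u v : V} (h : G.Adj u v) : G.Adj v u := by
  obtain ⟨e, h⟩ := h
  exact ⟨e, h.symm⟩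

lemma step_eq_or_rev {t t' : G.Step} (h : t.1 = t'.1) : t' = t ∨ t' = G.stepRev t := by
  obtain ⟨e, c⟩ := t
  obtain ⟨e', c'⟩ := t'
  simp only at h
  subst h
  cases c <;> cases c' <;> simp [stepRev]

lemma head?_append_cons {A : Type*} (l : List A) (a : A) (l1 l2 : List A) :
    (l ++ a :: l1).head? = (l ++ a :: l2).head? := by cases l <;> rfl

lemma cut_dir {S : Set V} {α : Bool} {st : G.Step} (hcut : G.CutSign S α st.1) :
    (G.src st ∈ S ∧ G.tgt st ∉ S ∧ G.ssign st = α) ∨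
    (G.src st ∉ S ∧ G.tgt st ∈ S ∧ G.tsign st = α) := by
  obtain ⟨e, c⟩ := st
  rcases hcut with ⟨h1, h2, h3⟩ | ⟨h1, h2, h3⟩ <;> cases c <;>
    simp_all [src, tgt, ssign, tsign, CutSign]

/-- forget the deletion constraint on a step of `G.delE F` -/
def unDel (G : BG V) (F : Set G.E) (st : (G.delE F).Step) : G.Step := (st.1.1, st.2)

@[simp] lemma src_unDel {F : Set G.E} (st : (G.delE F).Step) :
    G.src (G.unDel F st) = (G.delE F).src st := rfl
@[simp] lemma tgt_unDel {F : Set G.E} (st : (G.delE F).Step) :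
    G.tgt (G.unDel F st) = (G.delE F).tgt st := rfl
@[simp] lemma ssign_unDel {F : Set G.E} (st : (G.delE F).Step) :
    G.ssign (G.unDel F st) = (G.delE F).ssign st := rfl
@[simp] lemma tsign_unDel {F : Set G.E} (st : (G.delE F).Step) :
    G.tsign (G.unDel F st) = (G.delE F).tsign st := rfl

lemma map_fst_unDel {F : Set G.E} (p : List (G.delE F).Step) :
    (p.map (G.unDel F)).map Prod.fst = (p.map Prod.fst).map Subtype.val := by
  rw [List.map_map]
  exact (List.map_map (g := Subtype.val) (f := (Prod.fst : (G.delE F).Step → {e : G.E // e ∉ F})) (l := p)).symm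

lemma head_ssign_delE {F : Set G.E} (p : List (G.delE F).Step) :
    (p.map (G.unDel F)).head?.map G.ssign = p.head?.map (G.delE F).ssign := by
  rw [List.head?_map, Option.map_map]
  rfl

lemma last_tsign_delE {F : Set G.E} (p : List (G.delE F).Step) :
    (p.map (G.unDel F)).getLast?.map G.tsign = p.getLast?.map (G.delE F).tsign := by
  rw [List.getLast?_map, Option.map_map]
  rfl

lemma isDitrail_delE_iff {F : Set G.E} {p : List (G.delE F).Step} {x y : V} :
    (G.delE F).IsDitrail p x y ↔ G.IsDitrail (p.map (G.unDel F)) x y := by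
  constructor
  · rintro ⟨hnd, hch, hhd, hlast, hemp⟩
    refine ⟨?_, ?_, ?_, ?_, ?_⟩
    · rw [map_fst_unDel]
      exact hnd.map Subtype.val_injective
    · unfold List.Chain'
      rw [List.isChain_map]
      exact hch.imp (fun a b h => h)
    · intro st hst
      rw [List.head?_map] at hst
      obtain ⟨a, ha, rfl⟩ := Option.map_eq_some_iff.1 hst
      exact hhd a ha
    · intro st hst
      rw [List.getLast?_map] at hst
      obtain ⟨a, ha, rfl⟩ := Option.map_eq_some_iff.1 hst
      exact hlast a ha
    · intro h
      rw [List.map_eq_nil_iff] at h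
      exact hemp h
  · rintro ⟨hnd, hch, hhd, hlast, hemp⟩
    refine ⟨?_, ?_, ?_, ?_, ?_⟩
    · rw [map_fst_unDel] at hnd
      exact hnd.of_map Subtype.val
    · unfold List.Chain' at hch ⊢
      rw [List.isChain_map] at hch
      exact hch.imp (fun a b h => h)
    · intro st hst
      exact hhd (G.unDel F st) (by rw [List.head?_map, hst]; rfl)
    · intro st hst
      exact hlast (G.unDel F st) (by rw [List.getLast?_map, hst]; rfl)
    · intro h
      subst h
      exact hemp rfl

lemma exists_delE_list {F : Set G.E} {p : List G.Step} (h : ∀ st ∈ p, st.1 ∉ F) :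
    ∃ q : List (G.delE F).Step, q.map (G.unDel F) = p := by
  refine ⟨p.attach.map (fun st => (⟨st.1.1, h st.1 st.2⟩, st.1.2)), ?_⟩
  rw [List.map_map]
  conv_rhs => rw [← List.attach_map_subtype_val p]
  rfl

lemma mainlem {α : Bool} {S : Set V} {r : V}
    (hradial : ∀ v ∈ S, G.ReachW (G.inducedEdges S) α (!α) v r)
    (hnbr : ∀ u ∈ S, (∃ v, v ∉ S ∧ G.Adj u v) → ¬ G.Reach (!α) (!α) u r)
    {F : Set G.E} (hF : ∀ e ∈ F, G.CutSign S α e) {β : Bool} {x : V}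
    {p : List G.Step} (hp : G.IsDitrail p x r)
    (hh : (p.head?.map G.ssign).getD (!(!α)) = β)
    (hl : (p.getLast?.map G.tsign).getD (!α) = !α) :
    ∃ q, G.IsDitrail q x r ∧ (∀ st ∈ q, st.1 ∉ F) ∧
      (q.head?.map G.ssign).getD (!(!α)) = β ∧
      (q.getLast?.map G.tsign).getD (!α) = !α := by
  classical
  by_cases hFp : ∀ st ∈ p, st.1 ∉ F
  · exact ⟨p, hp, hFp, hh, hl⟩
  push_neg at hFp
  obtain ⟨q, st, rest, rfl, hstF, hqF⟩ := exists_first_split hFp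
  obtain ⟨u, hq, hstrest⟩ := isDitrail_split (p := q) (q := st :: rest) hp
  obtain ⟨v, hst1, hrest⟩ := isDitrail_split (p := [st]) (q := rest) hstrest
  have husrc : G.src st = u := hstrest.2.2.1 st rfl
  have hutgt : G.tgt st = v := hst1.2.2.2.1 st rfl
  rcases cut_dir (hF st.1 hstF) with ⟨hs1, hs2, hs3⟩ | ⟨hs1, hs2, hs3⟩
  · -- outward case: G.src st ∈ S, G.tgt st ∉ S, G.ssign st = α
    obtain ⟨w, hw, hwE, -, -, hwh, hwl⟩ := hradial (G.src st) hs1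
    have hwF : ∀ st' ∈ w, st'.1 ∉ F := by
      intro st' hmem hmemF
      rcases hF st'.1 hmemF with ⟨-, h2, -⟩ | ⟨-, h2, -⟩
      · exact h2 (hwE st' hmem).2
      · exact h2 (hwE st' hmem).1
    rcases q with - | ⟨qh, qt⟩
    · -- empty prefix: the radial ditrail w itself is the witness
      have hxu : x = G.src st := by rw [husrc]; exact hq.2.2.2.2 rfl
      have hβ : G.ssign st = β := by simpa using hh
      refine ⟨w, hxu ▸ hw, hwF, ?_, hwl⟩
      rw [hwh, ← hβ, hs3]
    · -- nonempty prefix q = qh :: qt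
      have hqune : (qh :: qt : List G.Step) ≠ [] := by simp
      obtain ⟨a, ha⟩ : ∃ a, (qh :: qt : List G.Step).getLast? = some a :=
        Option.isSome_iff_exists.1 (List.getLast?_isSome.2 hqune)
      have hja := (List.isChain_append.1 hp.2.1).2.2 a ha st rfl
      have hqsign : G.tsign a = !α := by rw [hja.2, hs3]
      have hhq : G.ssign qh = β := by simpa using hh
      rcases w with - | ⟨wh, wt⟩
      · -- w empty: then G.src st = r and q itself is the witness
        have hur : G.src st = r := hw.2.2.2.2 rfl
        refine ⟨qh :: qt, ?_, hqF, by simpa using hhq, by rw [ha]; simpa using hqsign⟩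
        rw [← hur, husrc]
        exact hq
      · by_cases hshare : ∃ t'' ∈ (wh :: wt : List G.Step), t''.1 ∈ (qh :: qt : List G.Step).map Prod.fst
        · -- sharing case
          obtain ⟨w1, t'', w2, hwsp, ht''q, hw2⟩ := exists_last_split hshare
          obtain ⟨t, htq, ht⟩ := List.mem_map.1 ht''q
          obtain ⟨q1, q2, hqsplit⟩ := List.append_of_mem htq
          have hqnd := hq.1
          rw [hqsplit] at hq
          rw [hqsplit, List.map_append, List.nodup_append'] at hqnd
          obtain ⟨z2, hq1, hq'⟩ := isDitrail_split hq
          obtain ⟨z3, ht1, hq2⟩ := isDitrail_split (p := [t]) (q := q2) hq'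
          have hz2 : G.src t = z2 := hq'.2.2.1 t rfl
          have hz3 : G.tgt t = z3 := ht1.2.2.2.1 t rfl
          have hwv := hw
          rw [hwsp] at hwv
          obtain ⟨z1, hw1, hw'⟩ := isDitrail_split hwv
          have hz1 : G.src t'' = z1 := hw'.2.2.1 t'' rfl
          rcases step_eq_or_rev ht with rfl | rfl
          · -- same direction: splice q1 + t + w2
            have hz12 : z1 = z2 := by rw [← hz1, ← hz2]
            refine ⟨q1 ++ t'' :: w2, isDitrail_append hq1 (hz12 ▸ hw') ?_ ?_, ?_, ?_, ?_⟩
            · intro i hi1 hi2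
              rw [List.map_cons] at hi2
              rcases List.mem_cons.1 hi2 with rfl | hi2'
              · exact hqnd.2.2 hi1 (by rw [List.map_cons]; exact List.mem_cons_self)
              · obtain ⟨b, hbw2, rfl⟩ := List.mem_map.1 hi2'
                refine hw2 b hbw2 ?_
                rw [hqsplit, List.map_append]
                exact List.mem_append_left _ hi1
            · intro a' ha' b hb
              rw [List.head?_cons] at hb
              have hb' := Option.some.inj hb
              subst hb'
              exact ((List.isChain_append.1 hq.2.1).2.2 a' ha' t'' rfl).2
            · intro st' hst'
              rcases List.mem_append.1 hst' with h | h
              · exact hqF st' (by rw [hqsplit]; exact List.mem_append_left _ h)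
              · rcases List.mem_cons.1 h with rfl | h'
                · exact hqF st' htq
                · exact hwF st' (by rw [hwsp]; exact List.mem_append_right _ (List.mem_cons_of_mem _ h'))
            · rw [head?_append_cons q1 t'' w2 q2, ← hqsplit]
              simpa using hhq
            · rw [List.getLast?_append_of_ne_nil _ (by simp),
                ← List.getLast?_append_of_ne_nil w1 (show (t'' :: w2 : List _) ≠ [] by simp), ← hwsp]
              exact hwl
          · -- opposite direction: contradiction with hnbr
            exfalso
            have hz13 : z1 = z3 := by rw [← hz1, src_stepRev, hz3]
            refine hnbr (G.src st) hs1 ⟨G.tgt st, hs2, G.adj_step st⟩ ?_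
            have h1 : G.IsDitrail (G.prev q2) (G.src st) z3 := by
              rw [husrc]
              exact isDitrail_prev hq2
            have hC : G.IsDitrail (G.prev q2 ++ G.stepRev t :: w2) (G.src st) r := by
              refine isDitrail_append h1 (hz13 ▸ hw') ?_ ?_
              · intro i hi1 hi2
                rw [prev_map_fst, List.mem_reverse] at hi1
                rw [List.map_cons, stepRev_fst] at hi2
                rcases List.mem_cons.1 hi2 with rfl | hi2'
                · have hnd2 := hqnd.2.1
                  rw [List.map_cons, List.nodup_cons] at hnd2
                  exact hnd2.1 hi1
                · obtain ⟨b, hbw2, rfl⟩ := List.mem_map.1 hi2'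
                  refine hw2 b hbw2 ?_
                  rw [hqsplit, List.map_append]
                  refine List.mem_append_right _ ?_
                  rw [List.map_cons]
                  exact List.mem_cons_of_mem _ hi1
              · intro a' ha' b hb
                rw [prev_getLast?] at ha'
                obtain ⟨b0, hb0, rfl⟩ := Option.map_eq_some_iff.1 ha'
                rw [List.head?_cons] at hb
                obtain rfl := Option.some.inj hb
                have hrel := (List.isChain_cons.1 hq'.2.1).1 b0 hb0
                rw [tsign_stepRev, ssign_stepRev]
                exact bool_flip hrel.2
            refine ⟨G.prev q2 ++ G.stepRev t :: w2, hC, by simp, by simp, by simp, ?_, ?_⟩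
            · rcases hq20 : q2 with - | ⟨q2h, q2t⟩
              · have hat : a = t := by
                  rw [hqsplit, hq20, List.getLast?_append_of_ne_nil _ (by simp)] at ha
                  exact (Option.some.inj ha).symm
                simp only [prev, List.map_nil, List.reverse_nil, List.nil_append, List.head?_cons,
                  Option.map_some, Option.getD_some, ssign_stepRev]
                rw [← hat]
                exact hqsign
              · have hpne : G.prev (q2h :: q2t) ≠ [] := by simp [prev]
                rw [List.head?_append_of_ne_nil _ hpne, prev_head?]
                have hq2last : (qh :: qt : List G.Step).getLast? = (q2h :: q2t).getLast? := by
                  rw [hqsplit, hq20, List.getLast?_append_of_ne_nil _ (by simp),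
                    show t :: q2h :: q2t = [t] ++ q2h :: q2t from rfl,
                    List.getLast?_append_of_ne_nil _ (by simp)]
                rw [← hq2last, ha]
                simpa using hqsign
            · rw [List.getLast?_append_of_ne_nil _ (by simp),
                ← List.getLast?_append_of_ne_nil w1 (show (G.stepRev t :: w2 : List _) ≠ [] by simp),
                ← hwsp]
              exact hwl
        · -- disjoint: concatenate q and w
          push_neg at hshare
          refine ⟨(qh :: qt) ++ (wh :: wt), isDitrail_append hq (husrc ▸ hw) ?_ ?_, ?_, ?_, ?_⟩
          · intro i hi1 hi2
            obtain ⟨t'', ht''mem, ht''⟩ := List.mem_map.1 hi2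
            exact hshare t'' ht''mem (ht'' ▸ hi1)
          · intro a' ha' b hb
            rw [ha] at ha'
            obtain rfl := Option.some.inj ha'
            have hbs : G.ssign b = α := by
              rw [List.head?_cons] at hb
              obtain rfl := Option.some.inj hb
              simpa using hwh
            rw [hqsign, hbs]
          · intro st' hst'
            rcases List.mem_append.1 hst' with h | h
            exacts [hqF st' h, hwF st' h]
          · simpa using hhq
          · rw [List.getLast?_append_of_ne_nil _ (by simp)]
            exact hwl
  · -- inward case: G.src st ∉ S, G.tgt st ∈ S, G.tsign st = α
    exfalso
    rcases hrest0 : rest with - | ⟨st', rest'⟩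
    · have hlp : (q ++ st :: rest).getLast? = some st := by
        rw [hrest0, List.getLast?_append_of_ne_nil _ (by simp)]
        rfl
      rw [hlp] at hl
      simp only [Option.map_some, Option.getD_some] at hl
      rw [hs3] at hl
      simp at hl
    · have hss : G.ssign st' = !α := by
        have hch := hstrest.2.1
        rw [hrest0] at hch
        have h2 := (List.isChain_cons_cons.1 hch).1.2
        rw [hs3] at h2
        exact bool_flip h2
      refine hnbr (G.tgt st) hs2 ⟨G.src st, hs1, G.adj_symm (G.adj_step st)⟩ ?_
      refine ⟨rest, hutgt ▸ hrest, by simp, by simp, by simp, ?_, ?_⟩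
      · rw [hrest0]
        simp [hss]
      · have hlast : (q ++ st :: rest).getLast? = rest.getLast? := by
          rw [List.getLast?_append_of_ne_nil _ (by simp),
            show st :: rest = [st] ++ rest from rfl,
            List.getLast?_append_of_ne_nil _ (by rw [hrest0]; simp)]
        rw [← hlast]
        exact hl

end Aux
end BG

theorem stmt4 {V : Type} (G : BG V) (α : Bool) (S : Set V) (r : V) (hr : r ∈ S)
    (hradial : ∀ v ∈ S, G.ReachW (G.inducedEdges S) α (!α) v r)
    (hnbr : ∀ u ∈ S, (∃ v, v ∉ S ∧ G.Adj u v) → ¬ G.Reach (!α) (!α) u r)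
    (F : Set G.E) (hF : ∀ e ∈ F, G.CutSign S α e) :
    ∀ (β : Bool) (x : V),
      (G.delE F).Reach β (!α) x r ↔ G.Reach β (!α) x r := by
  intro β x
  constructor
  · rintro ⟨p, hp, -, -, -, hh, hl⟩
    refine ⟨p.map (G.unDel F), BG.isDitrail_delE_iff.1 hp, by simp, by simp, by simp, ?_, ?_⟩
    · rw [BG.head_ssign_delE]; exact hh
    · rw [BG.last_tsign_delE]; exact hl
  · rintro ⟨p, hp, -, -, -, hh, hl⟩
    obtain ⟨q, hq, hqF, hqh, hql⟩ := BG.mainlem hradial hnbr hF hp hh hl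
    obtain ⟨q', rfl⟩ := BG.exists_delE_list hqF
    refine ⟨q', BG.isDitrail_delE_iff.2 hq, by simp, by simp, by simp, ?_, ?_⟩
    · rw [← BG.head_ssign_delE]; exact hqh
    · rw [← BG.last_tsign_delE]; exact hql
end
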